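/- arXiv:2603.23325 — 2 statements merged into one kernel-verified Lean document; each statement's English description precedes it below -/
import Mathlib

section
/- Let μ and ν be Borel probability measures on ℝ and ε > 0. If the Prohorov distance d_P(μ, ν) < ε, then for any κ ∈ (0, 1) with κ + ε < 1, we have pd(μ; 1 - (κ + ε)) ≤ pd(ν; 1 - κ) + 2ε. -/
open MeasureTheory Set
open scoped ENNReal

/-- The `α`-partial diameter of a Borel measure on `ℝ`. -/
noncomputable def partialDiam (μ : Measure ℝ) (α : ℝ) : ℝ≥0∞ :=
  ⨅ I ∈ {I : Set ℝ | MeasurableSet I ∧ ENNReal.ofReal α ≤ μ I}, EMetric.diam I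

/-- The Prohorov distance between two Borel measures on `ℝ`:
`inf { ε ≥ 0 : μ(U(A,ε)) ≥ ν(A) - ε for all Borel A }`. -/
noncomputable def prohorovDist (μ ν : Measure ℝ) : ℝ :=
  sInf {ε : ℝ | 0 ≤ ε ∧ ∀ A : Set ℝ, MeasurableSet A →
    ν A ≤ μ (Metric.thickening ε A) + ENNReal.ofReal ε}

/-! The proof: a set `I` carrying `ν`-mass `1 - κ` has a `δ`-thickening (with `δ < ε` admissible
in the definition of the Prohorov distance) that carries `μ`-mass at least `1 - κ - δ` and whose
diameter exceeds that of `I` by at most `2δ`. -/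

lemma partialDiam_le_ediam {μ : Measure ℝ} {α : ℝ} {I : Set ℝ} (hI : MeasurableSet I)
    (hμI : ENNReal.ofReal α ≤ μ I) : partialDiam μ α ≤ Metric.ediam I :=
  iInf₂_le I ⟨hI, hμI⟩

lemma partialDiam_mono (μ : Measure ℝ) : Monotone (partialDiam μ) :=
  fun _ _ hαβ => le_iInf₂ fun _ hI =>
    partialDiam_le_ediam hI.1 ((ENNReal.ofReal_le_ofReal hαβ).trans hI.2)

lemma partialDiam_sub_le_add_of_le_thickening {μ ν : Measure ℝ} {δ : ℝ} (hδ : 0 ≤ δ)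
    (hμν : ∀ A : Set ℝ, MeasurableSet A →
      ν A ≤ μ (Metric.thickening δ A) + ENNReal.ofReal δ) (α : ℝ) :
    partialDiam μ (α - δ) ≤ partialDiam ν α + ENNReal.ofReal (2 * δ) := by
  conv_rhs => rw [partialDiam, iInf_subtype', ENNReal.iInf_add]
  refine le_iInf fun ⟨I, hI, hνI⟩ => ?_
  have hmass : ENNReal.ofReal (α - δ) ≤ μ (Metric.thickening δ I) := by
    rw [ENNReal.ofReal_sub α hδ, tsub_le_iff_right]
    exact hνI.trans (hμν I hI)
  have hdiam : Metric.ediam (Metric.thickening δ I) ≤ Metric.ediam I + ENNReal.ofReal (2 * δ) := by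
    have := Metric.ediam_thickening_le (s := I) δ.toNNReal
    rw [Real.coe_toNNReal δ hδ] at this
    rwa [ENNReal.ofReal_mul zero_le_two, ENNReal.ofReal_ofNat]
  exact (partialDiam_le_ediam Metric.isOpen_thickening.measurableSet hmass).trans hdiam

lemma exists_le_thickening_of_prohorovDist_lt {μ ν : Measure ℝ} [IsFiniteMeasure ν] {ε : ℝ}
    (h : prohorovDist μ ν < ε) :
    ∃ δ, 0 ≤ δ ∧ δ < ε ∧ ∀ A : Set ℝ, MeasurableSet A →
      ν A ≤ μ (Metric.thickening δ A) + ENNReal.ofReal δ := by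
  have hne : {δ : ℝ | 0 ≤ δ ∧ ∀ A : Set ℝ, MeasurableSet A →
      ν A ≤ μ (Metric.thickening δ A) + ENNReal.ofReal δ}.Nonempty := by
    refine ⟨(ν univ).toReal, ENNReal.toReal_nonneg, fun A _ => ?_⟩
    rw [ENNReal.ofReal_toReal (measure_ne_top ν univ)]
    exact (measure_mono (subset_univ A)).trans le_add_self
  obtain ⟨δ, ⟨hδ, hμν⟩, hδε⟩ := exists_lt_of_csInf_lt hne h
  exact ⟨δ, hδ, hδε, hμν⟩

theorem partialDiam_le_of_prohorov_lt_general (μ ν : Measure ℝ)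
    [IsProbabilityMeasure ν]
    (ε : ℝ) (h : prohorovDist μ ν < ε)
    (κ : ℝ) :
    partialDiam μ (1 - (κ + ε)) ≤ partialDiam ν (1 - κ) + ENNReal.ofReal (2 * ε) := by
  obtain ⟨δ, hδ, hδε, hμν⟩ := exists_le_thickening_of_prohorovDist_lt h
  calc partialDiam μ (1 - (κ + ε))
      ≤ partialDiam μ (1 - κ - δ) := partialDiam_mono μ (by linarith)
    _ ≤ partialDiam ν (1 - κ) + ENNReal.ofReal (2 * δ) :=
        partialDiam_sub_le_add_of_le_thickening hδ hμν _
    _ ≤ partialDiam ν (1 - κ) + ENNReal.ofReal (2 * ε) := by gcongr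

theorem partialDiam_le_of_prohorov_lt (μ ν : Measure ℝ)
    [IsProbabilityMeasure μ] [IsProbabilityMeasure ν]
    (ε : ℝ) (hε : 0 < ε) (h : prohorovDist μ ν < ε)
    (κ : ℝ) (hκ : 0 < κ) (hκε : κ + ε < 1) :
    partialDiam μ (1 - (κ + ε)) ≤ partialDiam ν (1 - κ) + ENNReal.ofReal (2 * ε) :=
  partialDiam_le_of_prohorov_lt_general μ ν ε h κ
end

section
/- Let X, Y be complete separable metric spaces with fully supported Borel probability measures μ_X, μ_Y, and let F_X ⊆ Lip₁(X, ℝ), F_Y ⊆ Lip₁(Y, ℝ) be families of 1-Lipschitz functions. Let π be a coupling of μ_X and μ_Y and suppose D := H_{d_KF^π}(F_X ∘ pr₁, F_Y ∘ pr₂) < 1 (Hausdorff distance with respect to the Ky Fan metric on (X × Y, π)). Then for every f in the closure F̄_X (in convergence in measure) there exists g ∈ F̄_Y such that d_KF^π(f ∘ pr₁, g ∘ pr₂) ≤ D. -/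
open MeasureTheory Set
open scoped ENNReal

/-- The Ky Fan (extended) distance between two maps into a pseudo-emetric space. -/
noncomputable def eKyFan {X Y : Type*} [MeasurableSpace X] [PseudoEMetricSpace Y]
    (μ : Measure X) (f g : X → Y) : ℝ≥0∞ :=
  sInf {ε : ℝ≥0∞ | μ {x | ε < edist (f x) (g x)} ≤ ε}

/-- Hausdorff distance between two families of functions with respect to the
Ky Fan metric. -/
noncomputable def hausKF {X : Type*} [MeasurableSpace X]
    (μ : Measure X) (A B : Set (X → ℝ)) : ℝ≥0∞ :=
  max (⨆ f ∈ A, ⨅ g ∈ B, eKyFan μ f g) (⨆ g ∈ B, ⨅ f ∈ A, eKyFan μ f g)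

/-- The closure of a family of functions with respect to the Ky Fan metric
(convergence in measure). -/
def closKF {X : Type*} [MeasurableSpace X] (μ : Measure X)
    (F : Set (X → ℝ)) : Set (X → ℝ) :=
  {g | ∀ ε : ℝ≥0∞, 0 < ε → ∃ f ∈ F, eKyFan μ f g < ε}

/-
Approximate `f` by `fₙ ∈ F_X` and pick partners `gₙ ∈ F_Y` whose Ky Fan distance to `f ∘ pr₁`
decreases to `D`. These distances stay below some `c < 1`, so a set of `π`-measure `> c` on which
`|f ∘ pr₁|` and the distance from `pr₂` to a fixed `y₀` are bounded contains, for each `n`, a point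
where `gₙ ∘ pr₂` is `c`-close to `f ∘ pr₁`; being `1`-Lipschitz, the `gₙ` are then bounded at `y₀`.
A subsequence converging on a dense sequence converges everywhere by equicontinuity; its limit `g`
lies in the Ky Fan closure of `F_Y`, and `d_KF(f ∘ pr₁, g ∘ pr₂) ≤ D` by the triangle inequality.
-/

open Filter Topology
open scoped NNReal

section eKyFan

variable {α β : Type*} [MeasurableSpace α] [PseudoEMetricSpace β] {μ : Measure α}
  {f g h : α → β} {ε : ℝ≥0∞}

theorem eKyFan_le_of_measure_le (hε : μ {x | ε < edist (f x) (g x)} ≤ ε) :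
    eKyFan μ f g ≤ ε :=
  sInf_le hε

theorem measure_lt_edist_le_of_eKyFan_lt (hε : eKyFan μ f g < ε) :
    μ {x | ε < edist (f x) (g x)} ≤ ε := by
  obtain ⟨δ, hδ, hδε⟩ := sInf_lt_iff.mp hε
  calc μ {x | ε < edist (f x) (g x)} ≤ μ {x | δ < edist (f x) (g x)} :=
        measure_mono fun _ hx => hδε.trans hx
    _ ≤ ε := hδ.trans hδε.le

theorem eKyFan_comm : eKyFan μ f g = eKyFan μ g f := by
  simp only [eKyFan, edist_comm]

theorem eKyFan_triangle : eKyFan μ f h ≤ eKyFan μ f g + eKyFan μ g h := by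
  simp only [eKyFan]
  rw [ENNReal.sInf_add]
  refine le_iInf₂ fun a ha => ?_
  rw [ENNReal.add_sInf]
  refine le_iInf₂ fun b hb => sInf_le ?_
  have hsub : {x | a + b < edist (f x) (h x)} ⊆
      {x | a < edist (f x) (g x)} ∪ {x | b < edist (g x) (h x)} := by
    intro x hx
    by_contra hx'
    simp only [mem_union, mem_ofPred_eq, not_or, not_lt] at hx'
    exact hx.not_ge ((edist_triangle _ (g x) _).trans (add_le_add hx'.1 hx'.2))
  calc μ {x | a + b < edist (f x) (h x)}
      ≤ μ {x | a < edist (f x) (g x)} + μ {x | b < edist (g x) (h x)} :=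
        (measure_mono hsub).trans (measure_union_le _ _)
    _ ≤ a + b := add_le_add ha hb

theorem eKyFan_comp_le {Ω : Type*} [MeasurableSpace Ω] {π : Measure Ω} {p : Ω → α}
    (hp : AEMeasurable p π) (hπ : π.map p = μ) (f g : α → β) :
    eKyFan π (f ∘ p) (g ∘ p) ≤ eKyFan μ f g :=
  sInf_le_sInf fun _ hε => (hπ ▸ Measure.le_map_apply hp _).trans hε

theorem exists_mem_edist_le_of_eKyFan_lt {S : Set α} (hε : eKyFan μ f g < ε) (hS : ε < μ S) :
    ∃ x ∈ S, edist (f x) (g x) ≤ ε := by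
  by_contra! H
  exact ((measure_mono H).trans (measure_lt_edist_le_of_eKyFan_lt hε)).not_gt hS

theorem MeasureTheory.TendstoInMeasure.tendsto_eKyFan {ι : Type*} {l : Filter ι}
    {F : ι → α → β} (hF : TendstoInMeasure μ F l g) :
    Tendsto (fun i => eKyFan μ (F i) g) l (𝓝 0) := by
  refine ENNReal.tendsto_nhds_zero.mpr fun ε hε => ?_
  filter_upwards [(hF ε hε).eventually_lt_const hε] with i hi
  exact eKyFan_le_of_measure_le <|
    (measure_mono (ofPred_subset_ofPred.mpr fun _ => le_of_lt)).trans hi.le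

theorem tendsto_eKyFan_of_tendsto [IsFiniteMeasure μ] [TopologicalSpace.PseudoMetrizableSpace β]
    {F : ℕ → α → β} (hF : ∀ n, AEStronglyMeasurable (F n) μ)
    (hlim : ∀ x, Tendsto (F · x) atTop (𝓝 (g x))) :
    Tendsto (fun n => eKyFan μ (F n) g) atTop (𝓝 0) :=
  (tendstoInMeasure_of_tendsto_ae hF (ae_of_all μ hlim)).tendsto_eKyFan

theorem mem_closKF_of_tendsto_eKyFan {ι : Type*} {l : Filter ι} [l.NeBot] {F : Set (α → ℝ)}
    {G : ι → α → ℝ} {g : α → ℝ} (hG : ∀ i, G i ∈ F)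
    (hlim : Tendsto (fun i => eKyFan μ (G i) g) l (𝓝 0)) : g ∈ closKF μ F := fun _ hε =>
  let ⟨i, hi⟩ := (hlim.eventually_lt_const hε).exists
  ⟨G i, hG i, hi⟩

theorem exists_mem_eKyFan_lt_of_hausKF_lt {A B : Set (α → ℝ)} {u : α → ℝ} (hu : u ∈ A)
    (h : hausKF μ A B < ε) : ∃ v ∈ B, eKyFan μ u v < ε := by
  have : ⨅ v ∈ B, eKyFan μ u v < ε :=
    ((le_iSup₂ (f := fun u (_ : u ∈ A) => ⨅ v ∈ B, eKyFan μ u v) u hu).trans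
      (le_max_left _ _)).trans_lt h
  simpa only [iInf_lt_iff, exists_prop] using this

end eKyFan

theorem exists_mem_eKyFan_comp_lt_of_mem_closKF {Ω X Y : Type*} [MeasurableSpace Ω]
    [MeasurableSpace X] {π : Measure Ω} {μ : Measure X} {p : Ω → X} {q : Ω → Y}
    (hp : AEMeasurable p π) (hπ : π.map p = μ) {FX : Set (X → ℝ)} {FY : Set (Y → ℝ)}
    {f : X → ℝ} (hf : f ∈ closKF μ FX) {t : ℝ≥0∞}
    (ht : hausKF π ((fun f => f ∘ p) '' FX) ((fun g => g ∘ q) '' FY) < t) :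
    ∃ g ∈ FY, eKyFan π (f ∘ p) (g ∘ q) < t := by
  obtain ⟨s, hs, hst⟩ := exists_between ht
  obtain ⟨f', hf', hff'⟩ := hf (t - s) (tsub_pos_of_lt hst)
  obtain ⟨_, ⟨g, hg, rfl⟩, hf'g⟩ :=
    exists_mem_eKyFan_lt_of_hausKF_lt (mem_image_of_mem _ hf') hs
  refine ⟨g, hg, ?_⟩
  calc eKyFan π (f ∘ p) (g ∘ q) ≤ eKyFan π (f ∘ p) (f' ∘ p) + eKyFan π (f' ∘ p) (g ∘ q) :=
        eKyFan_triangle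
    _ < t - s + s := by
        refine ENNReal.add_lt_add ?_ hf'g
        rw [eKyFan_comm]
        exact (eKyFan_comp_le hp hπ f' f).trans_lt hff'
    _ = t := tsub_add_cancel_of_le hst.le

theorem exists_abs_le_of_eKyFan_lt {Ω Y ι : Type*} [MeasurableSpace Ω] [PseudoMetricSpace Y]
    {ν : Measure Ω} {u : Ω → ℝ} {q : Ω → Y} {g : ι → Y → ℝ} {K : ℝ≥0}
    (hg : ∀ i, LipschitzWith K (g i)) {c : ℝ≥0∞} (hc : c < ν univ)
    (hgc : ∀ i, eKyFan ν u (g i ∘ q) < c) : ∃ y₀ C, ∀ i, |g i y₀| ≤ C := by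
  obtain ⟨ω₀, -⟩ := nonempty_of_measure_ne_zero (pos_of_gt hc).ne'
  set y₀ := q ω₀
  set S : ℕ → Set Ω := fun R => {ω | |u ω| ≤ R ∧ dist (q ω) y₀ ≤ R}
  have hS : Monotone S := fun R R' h ω hω =>
    ⟨hω.1.trans (Nat.cast_le.mpr h), hω.2.trans (Nat.cast_le.mpr h)⟩
  have hSU : ⋃ R, S R = univ := eq_univ_of_forall fun ω =>
    let ⟨R, hR⟩ := exists_nat_ge (max |u ω| (dist (q ω) y₀))
    mem_iUnion.mpr ⟨R, max_le_iff.mp hR⟩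
  -- measure continuity along increasing unions holds for arbitrary sets, so `u` need not be
  -- measurable
  obtain ⟨R, hR⟩ : ∃ R, c < ν (S R) :=
    ((tendsto_measure_iUnion_atTop hS).eventually_const_lt (hSU ▸ hc)).exists
  refine ⟨y₀, R + c.toReal + K * R, fun i => ?_⟩
  obtain ⟨ω, ⟨hu, hq⟩, hω⟩ := exists_mem_edist_le_of_eKyFan_lt (hgc i) hR
  have h₁ : |u ω - g i (q ω)| ≤ c.toReal := by
    rw [← Real.dist_eq, dist_edist]
    exact ENNReal.toReal_mono hc.ne_top hω
  have h₂ : |g i (q ω) - g i y₀| ≤ K * R := by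
    rw [← Real.dist_eq]
    exact ((hg i).dist_le_mul _ _).trans (mul_le_mul_of_nonneg_left hq K.coe_nonneg)
  rw [abs_le] at hu h₁ h₂ ⊢
  constructor <;> linarith

theorem exists_subseq_tendsto_pi_of_isBounded {ι E : Type*} [Countable ι]
    [PseudoMetricSpace E] [ProperSpace E] {u : ℕ → ι → E}
    (hu : ∀ i, Bornology.IsBounded (range fun n => u n i)) :
    ∃ (φ : ℕ → ℕ) (a : ι → E), StrictMono φ ∧ Tendsto (u ∘ φ) atTop (𝓝 a) := by
  obtain ⟨a, -, φ, hφ, ha⟩ :=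
    (isCompact_univ_pi fun i => (hu i).isCompact_closure).tendsto_subseq
      fun n => mem_univ_pi.mpr fun i => subset_closure (mem_range_self n)
  exact ⟨φ, a, hφ, ha⟩

theorem EquicontinuousAt.cauchySeq_of_mem_closure {ι X E : Type*} [Nonempty ι]
    [SemilatticeSup ι] [TopologicalSpace X] [PseudoMetricSpace E] {F : ι → X → E}
    {s : Set X} {x : X} (hF : EquicontinuousAt F x) (hs : ∀ y ∈ s, CauchySeq (F · y))
    (hx : x ∈ closure s) : CauchySeq (F · x) := by
  refine Metric.cauchySeq_iff.mpr fun ε hε => ?_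
  obtain ⟨y, hFy, hy⟩ :=
    ((Metric.equicontinuousAt_iff_right.mp hF (ε / 3) (by positivity)).and_frequently
      (mem_closure_iff_frequently.mp hx)).exists
  obtain ⟨N, hN⟩ := Metric.cauchySeq_iff.mp (hs y hy) (ε / 3) (by positivity)
  refine ⟨N, fun m hm n hn => ?_⟩
  calc dist (F m x) (F n x)
      ≤ dist (F m x) (F m y) + dist (F m y) (F n y) + dist (F n y) (F n x) :=
        dist_triangle4 _ _ _ _
    _ < ε / 3 + ε / 3 + ε / 3 := by
        gcongr
        exacts [hFy m, hN m hm n hn, dist_comm (F n y) (F n x) ▸ hFy n]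
    _ = ε := by ring

theorem exists_subseq_tendsto_of_lipschitzWith {Y : Type*} [PseudoMetricSpace Y]
    [TopologicalSpace.SeparableSpace Y] {g : ℕ → Y → ℝ} {K : ℝ≥0}
    (hg : ∀ n, LipschitzWith K (g n)) {y₀ : Y} {C : ℝ} (hC : ∀ n, |g n y₀| ≤ C) :
    ∃ (φ : ℕ → ℕ) (G : Y → ℝ), StrictMono φ ∧
      ∀ y, Tendsto (fun k => g (φ k) y) atTop (𝓝 (G y)) := by
  have : Nonempty Y := ⟨y₀⟩
  set e := TopologicalSpace.denseSeq Y
  have hbdd : ∀ y, Bornology.IsBounded (range fun n => g n y) := fun y =>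
    (Metric.isBounded_iff_subset_closedBall 0).mpr ⟨C + K * dist y y₀, by
      rintro _ ⟨n, rfl⟩
      rw [Metric.mem_closedBall, dist_zero_right, Real.norm_eq_abs]
      calc |g n y| ≤ |g n y₀| + |g n y - g n y₀| := by
            linarith [abs_sub_abs_le_abs_sub (g n y) (g n y₀)]
        _ ≤ C + K * dist y y₀ :=
            add_le_add (hC n) (Real.dist_eq _ _ ▸ (hg n).dist_le_mul y y₀)⟩
  obtain ⟨φ, a, hφ, ha⟩ :=
    exists_subseq_tendsto_pi_of_isBounded (u := fun n k => g n (e k)) fun k => hbdd (e k)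
  have hequi : Equicontinuous fun k => g (φ k) :=
    (LipschitzWith.uniformEquicontinuous _ K fun k => hg (φ k)).equicontinuous
  have hcauchy (y : Y) : CauchySeq fun k => g (φ k) y :=
    (hequi y).cauchySeq_of_mem_closure (s := range e)
      (by rintro _ ⟨k, rfl⟩; exact (tendsto_pi_nhds.mp ha k).cauchySeq)
      ((TopologicalSpace.denseRange_denseSeq Y).closure_range ▸ mem_univ y)
  choose G hG using fun y => cauchySeq_tendsto_of_complete (hcauchy y)
  exact ⟨φ, G, hφ, hG⟩

theorem exists_partner_in_closure_general {X Y : Type*}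
    [MeasurableSpace X]
    [MetricSpace Y] [TopologicalSpace.SeparableSpace Y]
    [MeasurableSpace Y] [BorelSpace Y]
    (μX : Measure X) (μY : Measure Y)
    [IsProbabilityMeasure μY]
    (FX : Set (X → ℝ)) (FY : Set (Y → ℝ))
    (hFY : ∀ g ∈ FY, LipschitzWith 1 g)
    (π : Measure (X × Y)) [IsProbabilityMeasure π]
    (hπ1 : π.map Prod.fst = μX)
    (hD : hausKF π ((fun f => f ∘ Prod.fst) '' FX) ((fun g => g ∘ Prod.snd) '' FY) < 1) :
    ∀ f ∈ closKF μX FX, ∃ g ∈ closKF μY FY,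
      eKyFan π (f ∘ Prod.fst) (g ∘ Prod.snd) ≤
        hausKF π ((fun f => f ∘ Prod.fst) '' FX) ((fun g => g ∘ Prod.snd) '' FY) := by
  intro f hf
  obtain ⟨t, ht_anti, ht, ht_lim⟩ := exists_seq_strictAnti_tendsto' hD
  choose g hgFY hgt using fun n =>
    exists_mem_eKyFan_comp_lt_of_mem_closKF measurable_fst.aemeasurable hπ1 hf (ht n).1
  have hg (n : ℕ) : LipschitzWith 1 (g n) := hFY _ (hgFY n)
  obtain ⟨y₀, C, hC⟩ := exists_abs_le_of_eKyFan_lt hg (c := t 0) (by simpa using (ht 0).2)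
    fun n => (hgt n).trans_le (ht_anti.antitone (Nat.zero_le n))
  obtain ⟨φ, G, hφ, hG⟩ := exists_subseq_tendsto_of_lipschitzWith hg hC
  have hmeas (n : ℕ) : Measurable (g n) := (hg n).continuous.measurable
  have hμY := tendsto_eKyFan_of_tendsto (μ := μY)
    (fun k => (hmeas (φ k)).aestronglyMeasurable) hG
  have hπ := tendsto_eKyFan_of_tendsto (μ := π)
    (fun k => ((hmeas (φ k)).comp measurable_snd).aestronglyMeasurable) fun z => hG z.2
  refine ⟨G, mem_closKF_of_tendsto_eKyFan (fun k => hgFY (φ k)) hμY, ?_⟩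
  refine ge_of_tendsto (by simpa using (ht_lim.comp hφ.tendsto_atTop).add hπ)
    (Eventually.of_forall fun k => ?_)
  calc eKyFan π (f ∘ Prod.fst) (G ∘ Prod.snd)
      ≤ eKyFan π (f ∘ Prod.fst) (g (φ k) ∘ Prod.snd) +
          eKyFan π (g (φ k) ∘ Prod.snd) (G ∘ Prod.snd) := eKyFan_triangle
    _ ≤ t (φ k) + eKyFan π (g (φ k) ∘ Prod.snd) (G ∘ Prod.snd) := by
        gcongr
        exact (hgt _).le

theorem exists_partner_in_closure {X Y : Type*}
    [MetricSpace X] [CompleteSpace X] [TopologicalSpace.SeparableSpace X]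
    [MeasurableSpace X] [BorelSpace X]
    [MetricSpace Y] [CompleteSpace Y] [TopologicalSpace.SeparableSpace Y]
    [MeasurableSpace Y] [BorelSpace Y]
    (μX : Measure X) (μY : Measure Y)
    [IsProbabilityMeasure μX] [IsProbabilityMeasure μY]
    (hsX : ∀ U : Set X, IsOpen U → U.Nonempty → 0 < μX U)
    (hsY : ∀ U : Set Y, IsOpen U → U.Nonempty → 0 < μY U)
    (FX : Set (X → ℝ)) (FY : Set (Y → ℝ))
    (hFX : ∀ f ∈ FX, LipschitzWith 1 f) (hFY : ∀ g ∈ FY, LipschitzWith 1 g)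
    (π : Measure (X × Y)) [IsProbabilityMeasure π]
    (hπ1 : π.map Prod.fst = μX) (hπ2 : π.map Prod.snd = μY)
    (hD : hausKF π ((fun f => f ∘ Prod.fst) '' FX) ((fun g => g ∘ Prod.snd) '' FY) < 1) :
    ∀ f ∈ closKF μX FX, ∃ g ∈ closKF μY FY,
      eKyFan π (f ∘ Prod.fst) (g ∘ Prod.snd) ≤
        hausKF π ((fun f => f ∘ Prod.fst) '' FX) ((fun g => g ∘ Prod.snd) '' FY) :=
  exists_partner_in_closure_general μX μY FX FY hFY π hπ1 hD
end
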